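/- Define integers c(i, m) for i, m ∈ ℕ by: c(0,0) = c(0,1) = 2; c(i,0) = c(i,1) = 0 for i ≥ 1; c(0, m+2) = 2·c(0, m+1); and c(i+1, m+2) = 2·c(i+1, m+1) − c(i, m). Then for every m ≥ 1 and every i with 0 ≤ i ≤ ⌊m/2⌋, one has c(i, m) > 0 if i is even and c(i, m) < 0 if i is odd. -/
import Mathlib


/-- The coefficients `c_{i,m}` of the paper, defined by the recursion
`c(0,0) = c(0,1) = 2`, `c(i,0) = c(i,1) = 0` for `i ≥ 1`, `c(0, m+2) = 2·c(0, m+1)` and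
`c(i+1, m+2) = 2·c(i+1, m+1) − c(i, m)`. -/
def c : ℕ → ℕ → ℤ
  | 0, 0 => 2
  | 0, 1 => 2
  | _ + 1, 0 => 0
  | _ + 1, 1 => 0
  | 0, m + 2 => 2 * c 0 (m + 1)
  | i + 1, m + 2 => 2 * c (i + 1) (m + 1) - c i m
termination_by i m => m

lemma c0_pos : ∀ m, 0 < c 0 m := by
  intro m
  induction m using Nat.strong_induction_on with
  | _ m ih =>
    match m with
    | 0 => norm_num [c]
    | 1 => norm_num [c]
    | m + 2 =>
      have h : c 0 (m + 2) = 2 * c 0 (m + 1) := by simp [c]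
      have := ih (m + 1) (by omega)
      rw [h]; linarith

lemma c_zero : ∀ m i, m < 2 * i → c i m = 0 := by
  intro m
  induction m using Nat.strong_induction_on with
  | _ m ih =>
    intro i hi
    match m, i with
    | 0, i + 1 => simp [c]
    | 1, i + 1 => simp [c]
    | 0, 0 => omega
    | 1, 0 => omega
    | m + 2, 0 => omega
    | m + 2, i + 1 =>
      have h : c (i + 1) (m + 2) = 2 * c (i + 1) (m + 1) - c i m := by simp [c]
      rw [h, ih (m + 1) (by omega) (i + 1) (by omega), ih m (by omega) i (by omega)]
      ring

/-- For `m ≥ 1` and `0 ≤ i ≤ ⌊m/2⌋`, the coefficient `c(i,m)` is positive for even `i`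
and negative for odd `i`. -/
theorem c_sign (m : ℕ) (hm : 1 ≤ m) (i : ℕ) (hi : i ≤ m / 2) :
    (Even i → 0 < c i m) ∧ (Odd i → c i m < 0) := by
  induction m using Nat.strong_induction_on generalizing i with
  | _ m ih =>
    match m, i with
    | 1, 0 => exact ⟨fun _ => by norm_num [c], fun h => by simp at h⟩
    | 1, i + 1 => omega
    | m + 2, 0 =>
      exact ⟨fun _ => c0_pos _, fun h => by simp at h⟩
    | 0 + 2, i + 1 =>
      have hi1 : i = 0 := by omega
      subst hi1
      refine ⟨fun h => by simp at h, fun _ => ?_⟩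
      norm_num [c]
    | (k + 1) + 2, i + 1 =>
      have h : c (i + 1) (k + 3) = 2 * c (i + 1) (k + 2) - c i (k + 1) := by simp [c]
      have hji : i ≤ (k + 1) / 2 := by omega
      have IH1 := ih (k + 1) (by omega) (by omega) i hji
      have h2 : c (i + 1) (k + 2) = 0 ∨ (Even (i+1) → 0 < c (i+1) (k+2)) ∧ (Odd (i+1) → c (i+1) (k+2) < 0) := by
        by_cases hc : i + 1 ≤ (k + 2) / 2
        · exact Or.inr (ih (k + 2) (by omega) (by omega) (i + 1) hc)
        · exact Or.inl (c_zero (k + 2) (i + 1) (by omega))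
      rw [h]
      constructor
      · intro he
        have ho : Odd i := by rcases Nat.even_or_odd i with h'|h' <;> simp_all [Nat.even_add_one, parity_simps]
        have := IH1.2 ho
        rcases h2 with h2 | h2
        · linarith
        · have := h2.1 he; linarith
      · intro ho
        have he : Even i := by rcases Nat.even_or_odd i with h'|h' <;> simp_all [Nat.even_add_one, parity_simps]
        have := IH1.1 he
        rcases h2 with h2 | h2
        · linarith
        · have := h2.2 ho; linarith
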